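/- arXiv:1605.01438 — 2 statements merged into one kernel-verified Lean document; each statement's English description precedes it below -/
import Mathlib

section
/- (Property 1.) Let B be a real P×M matrix with B𝟙 = 0 and with the mean-zero subspace {v : Σ_i v_i = 0} contained in the range of Bᵀ. Let Y = μ𝟙 + ε with ε having i.i.d. N(0,σ²) coordinates (σ > 0), let Ȳ be the sample mean, and let Λ(Y) = min{‖w‖_∞ : Bᵀw = Y − Ȳ𝟙}. Then for every λ ≥ 0 the event {f̂_λ(Y) = Ȳ𝟙} coincides with the event {Λ(Y) ≤ λ}; consequently, if λ_M satisfies ℙ(Λ(Y) ≤ λ_M) = 1 − α, then ℙ( f̂_{λ_M}(Y) = Ȳ𝟙 ) = 1 − α. -/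
open Matrix MeasureTheory ProbabilityTheory

/-!
Since `B𝟙 = 0`, moving from `f₀ = ȳ𝟙` to `f₀ + t h` (`t ≥ 0`) changes the objective by
`t (λ‖Bh‖₁ − ⟨y − ȳ𝟙, h⟩) + t²‖h‖²/2`, so `ȳ𝟙` is a minimiser iff `⟨y − ȳ𝟙, ·⟩ ≤ λ‖B·‖₁`.
By the duality between the sup norm and the `ℓ¹` norm (Hahn–Banach), this holds iff
`y − ȳ𝟙 = Bᵀw` for some `‖w‖_∞ ≤ λ`, i.e. iff `Λ(y) ≤ λ`; the hypothesis on the range of `Bᵀ`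
makes the feasible set of `Λ(y)` nonempty. The two events being equal, so are their
probabilities.
-/

/-- The total variation objective `F(f) = (1/2)‖y − f‖₂² + λ‖Bf‖₁`. -/
noncomputable def tvF {P M : ℕ} (B : Matrix (Fin P) (Fin M) ℝ) (lam : ℝ)
    (y f : Fin M → ℝ) : ℝ :=
  (1 / 2) * ∑ i, (y i - f i) ^ 2 + lam * ∑ j, |B.mulVec f j|

/-- `Λ(y) = min{‖w‖_∞ : Bᵀw = y − ȳ𝟙}`, where `ȳ` is the mean of `y` and the norm on
`Fin P → ℝ` is the sup norm. -/
noncomputable def tvLam {P M : ℕ} (B : Matrix (Fin P) (Fin M) ℝ) (y : Fin M → ℝ) : ℝ :=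
  sInf ((fun w : Fin P → ℝ => ‖w‖) ''
    {w : Fin P → ℝ | B.transpose.mulVec w = fun i => y i - (∑ k, y k) / (M : ℝ)})

lemma le_of_forall_pos_le_add_mul {a b c : ℝ} (h : ∀ t > 0, a ≤ b + t * c) : a ≤ b := by
  by_contra! hba
  have hpos : 0 < (a - b) / (|c| + 1) := div_pos (by linarith) (by positivity)
  have hlt : (a - b) / (|c| + 1) * |c| < a - b := by
    rw [div_mul_eq_mul_div, div_lt_iff₀ (by positivity)]
    nlinarith
  have := h _ hpos
  nlinarith [le_abs_self c]

lemma Finset.sum_sub_average_eq_zero {ι : Type*} [Fintype ι] (x : ι → ℝ) :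
    ∑ i, (x i - (∑ k, x k) / Fintype.card ι) = 0 := by
  rcases isEmpty_or_nonempty ι with hι | hι
  · simp
  · rw [Finset.sum_sub_distrib, Finset.sum_const, Finset.card_univ, nsmul_eq_mul,
      mul_div_cancel₀ _ (by simp), sub_self]

lemma dotProduct_le_norm_mul_sum_abs {n : Type*} [Fintype n] (w v : n → ℝ) :
    w ⬝ᵥ v ≤ ‖w‖ * ∑ j, |v j| := by
  rw [Finset.mul_sum]
  refine Finset.sum_le_sum fun j _ => ?_
  calc w j * v j ≤ |w j| * |v j| := (le_abs_self _).trans (abs_mul _ _).le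
    _ ≤ ‖w‖ * |v j| := by gcongr; exact norm_le_pi_norm w j

section

variable {m n : Type*} [Fintype m] [Fintype n]

/-- For `⇐`, separate `c` from the compact convex set `Bᵀ(closedBall 0 λ)` by a functional
`⟨·, h⟩` and test it at the sign vector `λ • sign (B h)`. -/
lemma mem_transpose_mulVec_image_closedBall_iff (B : Matrix m n ℝ) {lam : ℝ} (hlam : 0 ≤ lam)
    (c : n → ℝ) :
    c ∈ Bᵀ.mulVec '' Metric.closedBall 0 lam ↔ ∀ h, c ⬝ᵥ h ≤ lam * ∑ j, |(B *ᵥ h) j| := by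
  constructor
  · rintro ⟨w, hw, rfl⟩ h
    rw [mulVec_transpose, ← dotProduct_mulVec]
    exact (dotProduct_le_norm_mul_sum_abs w _).trans
      (mul_le_mul_of_nonneg_right (mem_closedBall_zero_iff.mp hw)
        (Finset.sum_nonneg fun _ _ => abs_nonneg _))
  · intro hdual
    classical
    by_contra hc
    have hK : IsCompact (Bᵀ.mulVec '' Metric.closedBall 0 lam) :=
      (isCompact_closedBall _ _).image (Continuous.matrix_mulVec continuous_const continuous_id)
    have hKconv : Convex ℝ (Bᵀ.mulVec '' Metric.closedBall 0 lam) :=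
      (convex_closedBall _ _).linear_image Bᵀ.mulVecLin
    obtain ⟨g, u, hgK, hgc⟩ := geometric_hahn_banach_closed_point hKconv hK.isClosed hc
    set h : n → ℝ := fun i => g fun j => if i = j then 1 else 0
    have hg : ∀ x, g x = x ⬝ᵥ h := fun x => by
      simpa [h, dotProduct] using LinearMap.pi_apply_eq_sum_univ (g : (n → ℝ) →ₗ[ℝ] ℝ) x
    set w : m → ℝ := fun j => lam * SignType.sign ((B *ᵥ h) j)
    have hw : w ∈ Metric.closedBall 0 lam := by
      refine mem_closedBall_zero_iff.mpr ((pi_norm_le_iff_of_nonneg hlam).mpr fun j => ?_)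
      rw [norm_mul, Real.norm_of_nonneg hlam]
      exact mul_le_of_le_one_right hlam <| by
        rcases SignType.sign ((B *ᵥ h) j) with _ | _ | _ <;> simp
    have hgw : g (Bᵀ *ᵥ w) = lam * ∑ j, |(B *ᵥ h) j| := by
      rw [hg, mulVec_transpose, ← dotProduct_mulVec, dotProduct, Finset.mul_sum]
      exact Finset.sum_congr rfl fun j _ => by
        simp only [w, mul_assoc, sign_mul_self]
    have hwK := hgK _ ⟨w, hw, rfl⟩
    linarith [hdual h, hg c]

lemma sInf_norm_transpose_mulVec_eq_le_iff (B : Matrix m n ℝ) {lam : ℝ} (hlam : 0 ≤ lam)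
    {c : n → ℝ} (hc : ∃ w, Bᵀ *ᵥ w = c) :
    sInf ((‖·‖) '' {w | Bᵀ *ᵥ w = c}) ≤ lam ↔ ∀ h, c ⬝ᵥ h ≤ lam * ∑ j, |(B *ᵥ h) j| := by
  have hne : ((‖·‖) '' {w | Bᵀ *ᵥ w = c}).Nonempty := Set.Nonempty.image _ hc
  have hbdd : BddBelow ((‖·‖) '' {w | Bᵀ *ᵥ w = c}) := ⟨0, by rintro _ ⟨w, -, rfl⟩; positivity⟩
  constructor
  · intro hle h
    refine le_of_forall_pos_le_add_mul (c := ∑ j, |(B *ᵥ h) j|) fun ε hε => ?_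
    obtain ⟨_, ⟨w, hw, rfl⟩, hwε⟩ := exists_lt_of_csInf_lt hne (lt_add_of_le_of_pos hle hε)
    rw [← add_mul]
    exact (mem_transpose_mulVec_image_closedBall_iff B (by positivity) c).mp
      ⟨w, mem_closedBall_zero_iff.mpr hwε.le, hw⟩ h
  · intro hdual
    obtain ⟨w, hw, hwc⟩ := (mem_transpose_mulVec_image_closedBall_iff B hlam c).mpr hdual
    exact (csInf_le hbdd ⟨w, hwc, rfl⟩).trans (mem_closedBall_zero_iff.mp hw)

end

lemma tvF_add_smul {P M : ℕ} {B : Matrix (Fin P) (Fin M) ℝ} {f₀ : Fin M → ℝ}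
    (hf₀ : B *ᵥ f₀ = 0) (lam : ℝ) (y h : Fin M → ℝ) {t : ℝ} (ht : 0 ≤ t) :
    tvF B lam y (f₀ + t • h) =
      tvF B lam y f₀ + t * (lam * ∑ j, |(B *ᵥ h) j| - (y - f₀) ⬝ᵥ h) + t ^ 2 / 2 * (h ⬝ᵥ h) := by
  simp only [tvF, mulVec_add, mulVec_smul, hf₀, zero_add, Pi.zero_apply, abs_zero,
    Finset.sum_const_zero, mul_zero, add_zero, Pi.smul_apply, smul_eq_mul, abs_mul,
    abs_of_nonneg ht, dotProduct, Pi.add_apply, Pi.sub_apply, ← Finset.mul_sum]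
  have hsq : ∀ i, (y i - (f₀ i + t * h i)) ^ 2 =
      (y i - f₀ i) ^ 2 - 2 * t * ((y i - f₀ i) * h i) + t ^ 2 * (h i * h i) := fun i => by ring
  simp only [hsq, Finset.sum_add_distrib, Finset.sum_sub_distrib, ← Finset.mul_sum]
  ring

lemma forall_tvF_le_iff {P M : ℕ} {B : Matrix (Fin P) (Fin M) ℝ} {f₀ : Fin M → ℝ}
    (hf₀ : B *ᵥ f₀ = 0) (lam : ℝ) (y : Fin M → ℝ) :
    (∀ f, tvF B lam y f₀ ≤ tvF B lam y f) ↔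
      ∀ h, (y - f₀) ⬝ᵥ h ≤ lam * ∑ j, |(B *ᵥ h) j| := by
  constructor
  · intro hmin h
    refine le_of_forall_pos_le_add_mul (c := h ⬝ᵥ h / 2) fun t ht => ?_
    have hdir := hmin (f₀ + t • h)
    rw [tvF_add_smul hf₀ lam y h ht.le] at hdir
    have : 0 ≤ t * (lam * ∑ j, |(B *ᵥ h) j| - (y - f₀) ⬝ᵥ h + t * (h ⬝ᵥ h / 2)) := by
      linarith
    linarith [(mul_nonneg_iff_of_pos_left ht).mp this]
  · intro hdual f
    have hf := tvF_add_smul hf₀ lam y (f - f₀) zero_le_one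
    rw [one_smul, add_sub_cancel] at hf
    have hsq : 0 ≤ (f - f₀) ⬝ᵥ (f - f₀) := Finset.sum_nonneg fun i _ => mul_self_nonneg _
    linarith [hdual (f - f₀)]

lemma forall_tvF_mean_le_iff_tvLam_le {P M : ℕ} {B : Matrix (Fin P) (Fin M) ℝ}
    (hB1 : B *ᵥ (fun _ => (1 : ℝ)) = 0)
    (hrange : {v : Fin M → ℝ | ∑ i, v i = 0} ⊆ Set.range Bᵀ.mulVec) {lam : ℝ} (hlam : 0 ≤ lam)
    (y : Fin M → ℝ) :
    (∀ f, tvF B lam y (fun _ => (∑ k, y k) / (M : ℝ)) ≤ tvF B lam y f) ↔ tvLam B y ≤ lam := by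
  have hmean : B *ᵥ (fun _ => (∑ k, y k) / (M : ℝ)) = 0 := by
    rw [show (fun _ => (∑ k, y k) / (M : ℝ)) = ((∑ k, y k) / M) • fun _ : Fin M => (1 : ℝ) by
      ext; simp, mulVec_smul, hB1, smul_zero]
  have hfeasible : ∃ w, Bᵀ *ᵥ w = fun i => y i - (∑ k, y k) / (M : ℝ) :=
    hrange (by simpa using Finset.sum_sub_average_eq_zero y)
  exact (forall_tvF_le_iff hmean lam y).trans
    (sInf_norm_transpose_mulVec_eq_le_iff B hlam hfeasible).symm

theorem tv_constant_fit_event_eq_lam_event_general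
    (M P : ℕ) (B : Matrix (Fin P) (Fin M) ℝ)
    (hB1 : B.mulVec (fun _ => (1 : ℝ)) = 0)
    (hrange : {v : Fin M → ℝ | ∑ i, v i = 0} ⊆ Set.range B.transpose.mulVec)
    (σ μ : ℝ) :
    (∀ lam : ℝ, 0 ≤ lam →
      {ω : Fin M → ℝ | ∀ f : Fin M → ℝ,
          tvF B lam ω (fun _ => (∑ k, ω k) / (M : ℝ)) ≤ tvF B lam ω f} =
        {ω : Fin M → ℝ | tvLam B ω ≤ lam}) ∧
    ∀ lamM α : ℝ, 0 ≤ lamM →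
      (Measure.pi fun _ : Fin M => gaussianReal μ ⟨σ ^ 2, sq_nonneg σ⟩)
          {ω : Fin M → ℝ | tvLam B ω ≤ lamM} = ENNReal.ofReal (1 - α) →
      (Measure.pi fun _ : Fin M => gaussianReal μ ⟨σ ^ 2, sq_nonneg σ⟩)
          {ω : Fin M → ℝ | ∀ f : Fin M → ℝ,
            tvF B lamM ω (fun _ => (∑ k, ω k) / (M : ℝ)) ≤ tvF B lamM ω f} =
        ENNReal.ofReal (1 - α) := by
  have hevent : ∀ lam : ℝ, 0 ≤ lam →
      {ω : Fin M → ℝ | ∀ f : Fin M → ℝ,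
          tvF B lam ω (fun _ => (∑ k, ω k) / (M : ℝ)) ≤ tvF B lam ω f} =
        {ω : Fin M → ℝ | tvLam B ω ≤ lam} := fun lam hlam =>
    Set.ext fun ω => forall_tvF_mean_le_iff_tvLam_le hB1 hrange hlam ω
  exact ⟨hevent, fun lamM α hlamM hprob => by rwa [hevent lamM hlamM]⟩

/-- Property 1: for `Y = μ𝟙 + ε` with i.i.d. `N(0,σ²)` noise, the event
`{f̂_λ(Y) = Ȳ𝟙}` coincides with `{Λ(Y) ≤ λ}` for every `λ ≥ 0`; consequently, if
`ℙ(Λ(Y) ≤ λ_M) = 1 − α` then `ℙ(f̂_{λ_M}(Y) = Ȳ𝟙) = 1 − α`. -/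
theorem tv_constant_fit_event_eq_lam_event
    (M P : ℕ) (hM : 1 ≤ M) (B : Matrix (Fin P) (Fin M) ℝ)
    (hB1 : B.mulVec (fun _ => (1 : ℝ)) = 0)
    (hrange : {v : Fin M → ℝ | ∑ i, v i = 0} ⊆ Set.range B.transpose.mulVec)
    (σ μ : ℝ) (hσ : 0 < σ) :
    (∀ lam : ℝ, 0 ≤ lam →
      {ω : Fin M → ℝ | ∀ f : Fin M → ℝ,
          tvF B lam ω (fun _ => (∑ k, ω k) / (M : ℝ)) ≤ tvF B lam ω f} =
        {ω : Fin M → ℝ | tvLam B ω ≤ lam}) ∧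
    ∀ lamM α : ℝ, 0 ≤ lamM →
      (Measure.pi fun _ : Fin M => gaussianReal μ ⟨σ ^ 2, sq_nonneg σ⟩)
          {ω : Fin M → ℝ | tvLam B ω ≤ lamM} = ENNReal.ofReal (1 - α) →
      (Measure.pi fun _ : Fin M => gaussianReal μ ⟨σ ^ 2, sq_nonneg σ⟩)
          {ω : Fin M → ℝ | ∀ f : Fin M → ℝ,
            tvF B lamM ω (fun _ => (∑ k, ω k) / (M : ℝ)) ≤ tvF B lamM ω f} =
        ENNReal.ofReal (1 - α) :=
  tv_constant_fit_event_eq_lam_event_general M P B hB1 hrange σ μ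
end

section
/- (Necessary condition from Theorem 3.2, deterministic form.) In the setting of the exact-segmentation KKT conditions (1D TV with jump locations N_{•0} < … < N_{•L} and signs s₀ = s_L = 0, s₁,…,s_{L−1} ∈ {−1,+1}), suppose the TV estimate f̂_λ(y) achieves exact segmentation at some λ > 0 and that two consecutive interior jump signs are equal, s_{l−1} = s_l for some 2 ≤ l ≤ L−1. Then ĥ_l = ȳ_l, and for every i = 1,…,N_l the centered partial sums within piece l satisfy s_l · Σ_{k=1}^i ( y_{N_{•(l−1)}+k} − ȳ_l ) ∈ [0, 2λ]; in particular all these centered partial sums have the same sign. -/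
open Matrix

/-- The `(N−1)×N` finite-difference matrix of dimension one:
row `i` has `+1` in column `i` and `−1` in column `i+1`. -/
def oneDiff (N : ℕ) : Matrix (Fin (N - 1)) (Fin N) ℝ :=
  fun i j => if (j : ℕ) = (i : ℕ) then 1 else if (j : ℕ) = (i : ℕ) + 1 then -1 else 0

/-- The mean `ȳ_l` of `y` over the `l`-th piece (0-based indices `Nb (l−1) ≤ j < Nb l`). -/
noncomputable def pieceMean {N : ℕ} (y : Fin N → ℝ) (Nb : ℕ → ℕ) (l : ℕ) : ℝ :=
  (∑ j : Fin N, if Nb (l - 1) ≤ (j : ℕ) ∧ (j : ℕ) < Nb l then y j else 0) /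
    ((Nb l - Nb (l - 1) : ℕ) : ℝ)

/-- The partial sum `Σ_{k=1}^i y_{N_{•(l−1)}+k}` within the `l`-th piece. -/
noncomputable def piecePartialSum {N : ℕ} (y : Fin N → ℝ) (Nb : ℕ → ℕ) (l i : ℕ) : ℝ :=
  ∑ j : Fin N, if Nb (l - 1) ≤ (j : ℕ) ∧ (j : ℕ) < Nb (l - 1) + i then y j else 0

/-!
Add `t` to the minimizer `f̂` on a block `[a, b)` of indices. The fit term changes by
`(b - a) t² / 2 - t Σ_{[a,b)} (y - f̂)` and the penalty only through the differences `u`, `v` at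
the two ends of the block. For small `t`, `|u - t| - |u| = -sign(u) t` when `u ≠ 0`, while
`|v + t| - |v| ≤ |t|` always. Minimality of `f̂` therefore forces
`Σ_{[a,b)} (y - f̂) = λ (sign v - sign u)` when both ends jump, and
`|Σ_{[a,b)} (y - f̂) + λ sign u| ≤ λ` in general. Around piece `l` both jumps have sign `-s_l`, so
the first identity gives `ĥ_l = ȳ_l`; the second, on the first `i` points of piece `l`, gives
`|Σ (y - ȳ_l) - λ s_l| ≤ λ`.
-/

open Filter Topology

lemma nonneg_of_forall_mul_add_sq_mul_nonneg {A C d : ℝ} (hd : 0 < d)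
    (h : ∀ t, 0 < t → t ≤ d → 0 ≤ t * A + t ^ 2 * C) : 0 ≤ A := by
  have hlim : Tendsto (fun t : ℝ => A + t * C) (𝓝[>] 0) (𝓝 A) := by
    have := ((tendsto_id (x := 𝓝 (0 : ℝ))).mul_const C).const_add A
    simpa using this.mono_left nhdsWithin_le_nhds
  refine ge_of_tendsto hlim ?_
  filter_upwards [Ioc_mem_nhdsGT hd] with t ⟨ht0, htd⟩
  refine nonneg_of_mul_nonneg_right ?_ ht0
  linarith [h t ht0 htd]

lemma abs_sub_le_of_forall_abs_le {c S p q d : ℝ} (hd : 0 < d)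
    (h : ∀ t, |t| ≤ d → 0 ≤ c * t ^ 2 - t * S + p * t + q * |t|) : |S - p| ≤ q := by
  have hright : 0 ≤ -S + p + q := nonneg_of_forall_mul_add_sq_mul_nonneg (C := c) hd
    fun t ht0 htd => by
      have := h t (by rwa [abs_of_pos ht0]); rw [abs_of_pos ht0] at this; linarith
  have hleft : 0 ≤ S - p + q := nonneg_of_forall_mul_add_sq_mul_nonneg (C := c) hd
    fun t ht0 htd => by
      have := h (-t) (by rwa [abs_neg, abs_of_pos ht0])
      rw [abs_neg, abs_of_pos ht0] at this; linarith
  exact abs_le.mpr ⟨by linarith, by linarith⟩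

lemma abs_sub_sub_abs_of_abs_le {u t : ℝ} (hu : u ≠ 0) (ht : |t| ≤ |u|) :
    |u - t| - |u| = -(Real.sign u * t) := by
  obtain ⟨ht₁, ht₂⟩ := abs_le.mp ht
  rcases hu.lt_or_gt with hu | hu
  · rw [Real.sign_of_neg hu, abs_of_neg hu] at *
    rw [abs_of_nonpos (by linarith)]; ring
  · rw [Real.sign_of_pos hu, abs_of_pos hu] at *
    rw [abs_of_nonneg (by linarith)]; ring

lemma abs_add_sub_abs_of_abs_le {v t : ℝ} (hv : v ≠ 0) (ht : |t| ≤ |v|) :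
    |v + t| - |v| = Real.sign v * t := by
  have := abs_sub_sub_abs_of_abs_le (neg_ne_zero.mpr hv) (t := t) (by rwa [abs_neg])
  rw [Real.sign_neg, abs_neg, ← abs_neg (-v - t), neg_sub, sub_neg_eq_add, add_comm] at this
  linarith

lemma mul_nonneg_and_le_of_abs_sub_mul_le {s S lam : ℝ} (hs : s = 1 ∨ s = -1)
    (h : |S - lam * s| ≤ lam) : 0 ≤ s * S ∧ s * S ≤ 2 * lam := by
  obtain ⟨h₁, h₂⟩ := abs_le.mp h
  rcases hs with rfl | rfl <;> constructor <;> linarith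

lemma oneDiff_mulVec_apply {N : ℕ} (f : Fin N → ℝ) (r : Fin (N - 1)) :
    (oneDiff N *ᵥ f) r = f ⟨r, by omega⟩ - f ⟨r + 1, by omega⟩ := by
  rw [mulVec, dotProduct, Fintype.sum_eq_add ⟨r, by omega⟩ ⟨r + 1, by omega⟩
    (by simp [Fin.ext_iff])]
  · simp [oneDiff, sub_eq_add_neg]
  · rintro j ⟨hj₁, hj₂⟩
    simp only [ne_eq, Fin.ext_iff] at hj₁ hj₂
    simp [oneDiff, hj₁, hj₂]

section Block

variable {N : ℕ}

def blockSum (x : Fin N → ℝ) (a b : ℕ) : ℝ :=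
  ∑ j : Fin N, if a ≤ (j : ℕ) ∧ (j : ℕ) < b then x j else 0

def blockShift (f : Fin N → ℝ) (a b : ℕ) (t : ℝ) : Fin N → ℝ :=
  fun j => f j + if a ≤ (j : ℕ) ∧ (j : ℕ) < b then t else 0

lemma blockSum_sub (x z : Fin N → ℝ) (a b : ℕ) :
    blockSum (x - z) a b = blockSum x a b - blockSum z a b := by
  simp only [blockSum, ← Finset.sum_sub_distrib]
  refine Finset.sum_congr rfl fun j _ => ?_
  split_ifs <;> simp

lemma blockSum_eq_of_forall {x : Fin N → ℝ} {a b : ℕ} {c : ℝ} (hb : b ≤ N)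
    (hx : ∀ j : Fin N, a ≤ (j : ℕ) → (j : ℕ) < b → x j = c) :
    blockSum x a b = (b - a : ℕ) * c := by
  calc blockSum x a b = ∑ j : Fin N, if a ≤ (j : ℕ) ∧ (j : ℕ) < b then c else 0 :=
        Finset.sum_congr rfl fun j _ => by split_ifs with h; exacts [hx j h.1 h.2, rfl]
    _ = ∑ k ∈ Finset.range N, if a ≤ k ∧ k < b then c else 0 :=
        Fin.sum_univ_eq_sum_range (fun k => if a ≤ k ∧ k < b then c else 0) N
    _ = ∑ k ∈ Finset.Ico a b, c := by
        rw [← Finset.sum_filter]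
        congr 1
        ext k
        simp only [Finset.mem_filter, Finset.mem_range, Finset.mem_Ico]
        omega
    _ = (b - a : ℕ) * c := by simp

lemma sum_sq_sub_blockShift (y f : Fin N → ℝ) {a b : ℕ} (hb : b ≤ N) (t : ℝ) :
    ∑ j, (y j - blockShift f a b t j) ^ 2
      = ∑ j, (y j - f j) ^ 2 - 2 * t * blockSum (y - f) a b + (b - a : ℕ) * t ^ 2 := by
  have hpoint : ∀ j : Fin N, (y j - blockShift f a b t j) ^ 2 = (y j - f j) ^ 2
      - 2 * t * (if a ≤ (j : ℕ) ∧ (j : ℕ) < b then (y - f) j else 0)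
      + (if a ≤ (j : ℕ) ∧ (j : ℕ) < b then 1 else 0) * t ^ 2 := by
    intro j
    simp only [blockShift, Pi.sub_apply]
    split_ifs <;> ring
  have hcard : blockSum (N := N) (fun _ => (1 : ℝ)) a b = (b - a : ℕ) := by
    simpa using blockSum_eq_of_forall (c := 1) hb fun _ _ _ => rfl
  rw [Finset.sum_congr rfl fun j _ => hpoint j, Finset.sum_add_distrib, Finset.sum_sub_distrib,
    ← Finset.mul_sum, ← Finset.sum_mul, ← hcard]
  rfl

lemma oneDiff_mulVec_blockShift (f : Fin N → ℝ) {a b : ℕ} (ha : 1 ≤ a) (hab : a < b)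
    (t : ℝ) (r : Fin (N - 1)) :
    (oneDiff N *ᵥ blockShift f a b t) r = (oneDiff N *ᵥ f) r
      - (if (r : ℕ) = a - 1 then t else 0) + (if (r : ℕ) = b - 1 then t else 0) := by
  simp only [oneDiff_mulVec_apply, blockShift]
  split_ifs <;> first | omega | ring

lemma sum_abs_oneDiff_mulVec_blockShift (f : Fin N → ℝ) {a b : ℕ} (ha : 1 ≤ a) (hab : a < b)
    (hb : b < N) {u v : ℝ} (hu : (oneDiff N *ᵥ f) ⟨a - 1, by omega⟩ = u)
    (hv : (oneDiff N *ᵥ f) ⟨b - 1, by omega⟩ = v) (t : ℝ) :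
    ∑ r, |(oneDiff N *ᵥ blockShift f a b t) r|
      = ∑ r, |(oneDiff N *ᵥ f) r| + ((|u - t| - |u|) + (|v + t| - |v|)) := by
  rw [← sub_eq_iff_eq_add', ← Finset.sum_sub_distrib,
    Fintype.sum_eq_add ⟨a - 1, by omega⟩ ⟨b - 1, by omega⟩ (by simp [Fin.ext_iff]; omega)]
  · simp only [oneDiff_mulVec_blockShift f ha hab, hu, hv]
    simp [show a - 1 ≠ b - 1 by omega, show b - 1 ≠ a - 1 by omega]
  · rintro r ⟨hr₁, hr₂⟩
    simp only [ne_eq, Fin.ext_iff] at hr₁ hr₂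
    simp [oneDiff_mulVec_blockShift f ha hab, hr₁, hr₂]

end Block

section Minimizer

variable {N : ℕ} {lam : ℝ} {y f : Fin N → ℝ} {a b : ℕ} {u v : ℝ}

lemma tvF_blockShift (ha : 1 ≤ a) (hab : a < b) (hb : b < N)
    (hu : (oneDiff N *ᵥ f) ⟨a - 1, by omega⟩ = u) (hv : (oneDiff N *ᵥ f) ⟨b - 1, by omega⟩ = v)
    (t : ℝ) :
    tvF (oneDiff N) lam y (blockShift f a b t) = tvF (oneDiff N) lam y f
      + ((((b - a : ℕ) : ℝ) / 2) * t ^ 2 - t * blockSum (y - f) a b)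
      + lam * ((|u - t| - |u|) + (|v + t| - |v|)) := by
  rw [tvF, tvF, sum_sq_sub_blockShift y f hb.le,
    sum_abs_oneDiff_mulVec_blockShift f ha hab hb hu hv]
  ring

lemma blockShift_increment_nonneg (hmin : ∀ g, tvF (oneDiff N) lam y f ≤ tvF (oneDiff N) lam y g)
    (ha : 1 ≤ a) (hab : a < b) (hb : b < N)
    (hu : (oneDiff N *ᵥ f) ⟨a - 1, by omega⟩ = u) (hv : (oneDiff N *ᵥ f) ⟨b - 1, by omega⟩ = v)
    (t : ℝ) :
    0 ≤ (((b - a : ℕ) : ℝ) / 2) * t ^ 2 - t * blockSum (y - f) a b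
      + lam * ((|u - t| - |u|) + (|v + t| - |v|)) := by
  have := hmin (blockShift f a b t)
  rw [tvF_blockShift ha hab hb hu hv] at this
  linarith

theorem abs_blockSum_add_le_of_minimizer (hlam : 0 ≤ lam)
    (hmin : ∀ g, tvF (oneDiff N) lam y f ≤ tvF (oneDiff N) lam y g)
    (ha : 1 ≤ a) (hab : a < b) (hb : b < N)
    (hu : (oneDiff N *ᵥ f) ⟨a - 1, by omega⟩ = u) (hu0 : u ≠ 0) :
    |blockSum (y - f) a b + lam * Real.sign u| ≤ lam := by
  rw [← sub_neg_eq_add, ← neg_mul]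
  refine abs_sub_le_of_forall_abs_le (c := ((b - a : ℕ) : ℝ) / 2) (abs_pos.mpr hu0) fun t ht => ?_
  have hinc := blockShift_increment_nonneg hmin ha hab hb hu rfl t
  have hright : |(oneDiff N *ᵥ f) ⟨b - 1, by omega⟩ + t| - |(oneDiff N *ᵥ f) ⟨b - 1, by omega⟩|
      ≤ |t| := by linarith [abs_add_le ((oneDiff N *ᵥ f) ⟨b - 1, by omega⟩) t]
  rw [abs_sub_sub_abs_of_abs_le hu0 ht] at hinc
  nlinarith [mul_le_mul_of_nonneg_left hright hlam]

theorem blockSum_eq_of_minimizer (hmin : ∀ g, tvF (oneDiff N) lam y f ≤ tvF (oneDiff N) lam y g)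
    (ha : 1 ≤ a) (hab : a < b) (hb : b < N)
    (hu : (oneDiff N *ᵥ f) ⟨a - 1, by omega⟩ = u) (hu0 : u ≠ 0)
    (hv : (oneDiff N *ᵥ f) ⟨b - 1, by omega⟩ = v) (hv0 : v ≠ 0) :
    blockSum (y - f) a b = lam * (Real.sign v - Real.sign u) := by
  have hd : 0 < min |u| |v| := lt_min (abs_pos.mpr hu0) (abs_pos.mpr hv0)
  have := abs_sub_le_of_forall_abs_le (c := ((b - a : ℕ) : ℝ) / 2) (S := blockSum (y - f) a b)
    (p := lam * (Real.sign v - Real.sign u)) (q := 0) hd fun t ht => by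
    have hinc := blockShift_increment_nonneg hmin ha hab hb hu hv t
    rw [abs_sub_sub_abs_of_abs_le hu0 (ht.trans (min_le_left _ _)),
      abs_add_sub_abs_of_abs_le hv0 (ht.trans (min_le_right _ _))] at hinc
    linarith
  exact sub_eq_zero.mp (abs_nonpos_iff.mp this)

end Minimizer

section Pieces

variable {N L : ℕ} {Nb : ℕ → ℕ} {lam : ℝ} {y f : Fin N → ℝ} {h : ℕ → ℝ} {k : ℕ}

lemma piece_bounds (hNbL : Nb L = N) (hNbmono : ∀ l, l < L → Nb l < Nb (l + 1))
    (hk : 2 ≤ k) (hkL : k < L) : 1 ≤ Nb (k - 1) ∧ Nb (k - 1) < Nb k ∧ Nb k < N := by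
  have hmono : StrictMonoOn Nb (Set.Iic L) := strictMonoOn_Iic_of_lt_succ hNbmono
  have hlt : ∀ m n, m < n → n ≤ L → Nb m < Nb n := fun m n hmn hn =>
    hmono (Set.mem_Iic.mpr (by omega)) (Set.mem_Iic.mpr hn) hmn
  exact ⟨by have := hlt (k - 2) (k - 1) (by omega) (by omega); omega,
    hlt _ _ (by omega) hkL.le, hNbL ▸ hlt _ _ hkL le_rfl⟩

lemma oneDiff_mulVec_at_piece_start (hNbmono : ∀ l, l < L → Nb l < Nb (l + 1))
    (hf : ∀ l, 1 ≤ l → l ≤ L → ∀ j : Fin N, Nb (l - 1) ≤ (j : ℕ) → (j : ℕ) < Nb l → f j = h l)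
    (hk : 2 ≤ k) (hkL : k ≤ L) (r : Fin (N - 1)) (hr : (r : ℕ) = Nb (k - 1) - 1) :
    (oneDiff N *ᵥ f) r = h (k - 1) - h k := by
  have hprev := hNbmono (k - 1 - 1) (by omega)
  have hcur := hNbmono (k - 1) (by omega)
  rw [Nat.sub_add_cancel (by omega : 1 ≤ k - 1)] at hprev
  rw [Nat.sub_add_cancel (by omega : 1 ≤ k)] at hcur
  rw [oneDiff_mulVec_apply,
    hf (k - 1) (by omega) (by omega) _ (by simp only; omega) (by simp only; omega),
    hf k (by omega) hkL _ (by simp only; omega) (by simp only; omega)]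

lemma blockSum_sub_of_piece
    (hf : ∀ l, 1 ≤ l → l ≤ L → ∀ j : Fin N, Nb (l - 1) ≤ (j : ℕ) → (j : ℕ) < Nb l → f j = h l)
    (hk : 1 ≤ k) (hkL : k ≤ L) {b : ℕ} (hbk : b ≤ Nb k) (hbN : b ≤ N) :
    blockSum (y - f) (Nb (k - 1)) b = blockSum y (Nb (k - 1)) b - (b - Nb (k - 1) : ℕ) * h k := by
  rw [blockSum_sub, blockSum_eq_of_forall hbN fun j hj₁ hj₂ => hf k hk hkL j hj₁ (by omega)]

theorem eq_pieceMean_of_minimizer (hmin : ∀ g, tvF (oneDiff N) lam y f ≤ tvF (oneDiff N) lam y g)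
    (hNbL : Nb L = N) (hNbmono : ∀ l, l < L → Nb l < Nb (l + 1))
    (hf : ∀ l, 1 ≤ l → l ≤ L → ∀ j : Fin N, Nb (l - 1) ≤ (j : ℕ) → (j : ℕ) < Nb l → f j = h l)
    (hk : 2 ≤ k) (hkL : k < L) (hleft : h (k - 1) ≠ h k) (hright : h k ≠ h (k + 1))
    (hsign : Real.sign (h k - h (k - 1)) = Real.sign (h (k + 1) - h k)) :
    h k = pieceMean y Nb k := by
  obtain ⟨ha, hab, hbN⟩ := piece_bounds hNbL hNbmono hk hkL
  have hu := oneDiff_mulVec_at_piece_start hNbmono hf hk hkL.le ⟨Nb (k - 1) - 1, by omega⟩ rfl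
  have hv := oneDiff_mulVec_at_piece_start hNbmono hf (k := k + 1) (by omega) hkL
    ⟨Nb k - 1, by omega⟩ rfl
  rw [Nat.add_sub_cancel] at hv
  have := blockSum_eq_of_minimizer hmin ha hab hbN hu (sub_ne_zero.mpr hleft) hv
    (sub_ne_zero.mpr hright)
  rw [← neg_sub (h k), ← neg_sub (h (k + 1)), Real.sign_neg, Real.sign_neg, hsign, sub_self,
    mul_zero, blockSum_sub_of_piece hf (by omega) hkL.le le_rfl hbN.le, blockSum] at this
  have hpos : (0 : ℝ) < (Nb k - Nb (k - 1) : ℕ) := by exact_mod_cast Nat.sub_pos_of_lt hab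
  rw [pieceMean, eq_div_iff hpos.ne']
  linarith

theorem abs_piecePartialSum_sub_le_of_minimizer (hlam : 0 ≤ lam)
    (hmin : ∀ g, tvF (oneDiff N) lam y f ≤ tvF (oneDiff N) lam y g)
    (hNbL : Nb L = N) (hNbmono : ∀ l, l < L → Nb l < Nb (l + 1))
    (hf : ∀ l, 1 ≤ l → l ≤ L → ∀ j : Fin N, Nb (l - 1) ≤ (j : ℕ) → (j : ℕ) < Nb l → f j = h l)
    (hk : 2 ≤ k) (hkL : k < L) (hleft : h (k - 1) ≠ h k) {i : ℕ} (hi : 1 ≤ i)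
    (hik : i ≤ Nb k - Nb (k - 1)) :
    |piecePartialSum y Nb k i - i * h k - lam * Real.sign (h k - h (k - 1))| ≤ lam := by
  obtain ⟨ha, hab, hbN⟩ := piece_bounds hNbL hNbmono hk hkL
  have hu := oneDiff_mulVec_at_piece_start hNbmono hf hk hkL.le ⟨Nb (k - 1) - 1, by omega⟩ rfl
  have := abs_blockSum_add_le_of_minimizer hlam hmin ha (b := Nb (k - 1) + i) (by omega)
    (by omega) hu (sub_ne_zero.mpr hleft)
  rwa [blockSum_sub_of_piece hf (by omega) hkL.le (by omega) (by omega), Nat.add_sub_cancel_left,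
    ← neg_sub (h k), Real.sign_neg, mul_neg, ← sub_eq_add_neg] at this

end Pieces

theorem tv_exact_segmentation_equal_signs_consequence_general
    (N L : ℕ)
    (y : Fin N → ℝ) (lam : ℝ) (hlam : 0 < lam)
    (Nb : ℕ → ℕ) (hNbL : Nb L = N)
    (hNbmono : ∀ l, l < L → Nb l < Nb (l + 1))
    (s : ℕ → ℝ)
    (hs : ∀ l, 1 ≤ l → l ≤ L - 1 → s l = 1 ∨ s l = -1)
    (hhat : ℕ → ℝ)
    (hES : ∃ fhat : Fin N → ℝ,
      (∀ f : Fin N → ℝ, tvF (oneDiff N) lam y fhat ≤ tvF (oneDiff N) lam y f) ∧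
      (∀ l, 1 ≤ l → l ≤ L →
        ∀ j : Fin N, Nb (l - 1) ≤ (j : ℕ) → (j : ℕ) < Nb l → fhat j = hhat l) ∧
      (∀ l, 1 ≤ l → l ≤ L - 1 → Real.sign (hhat (l + 1) - hhat l) = s l))
    (l : ℕ) (hl2 : 2 ≤ l) (hlL : l ≤ L - 1)
    (hsame : s (l - 1) = s l) :
    hhat l = pieceMean y Nb l ∧
    ∀ i : ℕ, 1 ≤ i → i ≤ Nb l - Nb (l - 1) →
      0 ≤ s l * (piecePartialSum y Nb l i - (i : ℝ) * pieceMean y Nb l) ∧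
      s l * (piecePartialSum y Nb l i - (i : ℝ) * pieceMean y Nb l) ≤ 2 * lam := by
  obtain ⟨fhat, hmin, hpiece, hsign⟩ := hES
  have hsl := hs l (by omega) hlL
  have hleft : Real.sign (hhat l - hhat (l - 1)) = s l := by
    rw [← hsame, ← hsign (l - 1) (by omega) (by omega), Nat.sub_add_cancel (by omega : 1 ≤ l)]
  have hright : Real.sign (hhat (l + 1) - hhat l) = s l := hsign l (by omega) hlL
  have hne : ∀ x : ℝ, Real.sign x = s l → x ≠ 0 := fun x hx => by
    rw [ne_eq, ← Real.sign_eq_zero_iff, hx]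
    rcases hsl with h | h <;> norm_num [h]
  have hmean := eq_pieceMean_of_minimizer hmin hNbL hNbmono hpiece hl2 (by omega)
    (sub_ne_zero.mp (hne _ hleft)).symm (sub_ne_zero.mp (hne _ hright)).symm
    (hleft.trans hright.symm)
  refine ⟨hmean, fun i hi₁ hi₂ => mul_nonneg_and_le_of_abs_sub_mul_le hsl ?_⟩
  rw [← hmean, ← hleft]
  exact abs_piecePartialSum_sub_le_of_minimizer hlam.le hmin hNbL hNbmono hpiece hl2 (by omega)
    (sub_ne_zero.mp (hne _ hleft)).symm hi₁ hi₂

/-- necessary condition from Theorem 3.2, deterministic form: if the TV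
estimate achieves exact segmentation at some `λ > 0` and two consecutive interior jump
signs are equal (`s_{l−1} = s_l` for some `2 ≤ l ≤ L−1`), then `ĥ_l = ȳ_l` and for every
`i = 1,…,N_l` the centered partial sums within piece `l` satisfy
`s_l · Σ_{k=1}^i (y_{N_{•(l−1)}+k} − ȳ_l) ∈ [0, 2λ]`; in particular they all have the
same sign. -/
theorem tv_exact_segmentation_equal_signs_consequence
    (N L : ℕ) (hN : 2 ≤ N) (hL : 1 ≤ L)
    (y : Fin N → ℝ) (lam : ℝ) (hlam : 0 < lam)
    (Nb : ℕ → ℕ) (hNb0 : Nb 0 = 0) (hNbL : Nb L = N)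
    (hNbmono : ∀ l, l < L → Nb l < Nb (l + 1))
    (s : ℕ → ℝ) (hs0 : s 0 = 0) (hsL : s L = 0)
    (hs : ∀ l, 1 ≤ l → l ≤ L - 1 → s l = 1 ∨ s l = -1)
    (hhat : ℕ → ℝ)
    (hES : ∃ fhat : Fin N → ℝ,
      (∀ f : Fin N → ℝ, tvF (oneDiff N) lam y fhat ≤ tvF (oneDiff N) lam y f) ∧
      (∀ l, 1 ≤ l → l ≤ L →
        ∀ j : Fin N, Nb (l - 1) ≤ (j : ℕ) → (j : ℕ) < Nb l → fhat j = hhat l) ∧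
      (∀ l, 1 ≤ l → l ≤ L - 1 → Real.sign (hhat (l + 1) - hhat l) = s l))
    (l : ℕ) (hl2 : 2 ≤ l) (hlL : l ≤ L - 1)
    (hsame : s (l - 1) = s l) :
    hhat l = pieceMean y Nb l ∧
    ∀ i : ℕ, 1 ≤ i → i ≤ Nb l - Nb (l - 1) →
      0 ≤ s l * (piecePartialSum y Nb l i - (i : ℝ) * pieceMean y Nb l) ∧
      s l * (piecePartialSum y Nb l i - (i : ℝ) * pieceMean y Nb l) ≤ 2 * lam :=
  tv_exact_segmentation_equal_signs_consequence_general N L y lam hlam Nb hNbL hNbmono s hs hhat hES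
    l hl2 hlL hsame
end
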